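/- arXiv:2105.02948 — 5 statements merged into one kernel-verified Lean document; each statement's English description precedes it below -/
import Mathlib

section
/- Over the free monoid on an alphabet A, if x and y are elements of lengths n and m with d = gcd(n, m), and some power x^p of x and some power y^q of y have a common left factor of length at least n + m - d, then x and y are both powers of a single common element of the free monoid. -/
/-- Chaining a period: if `f` has period `n` below `L`, then every value below `L` is
determined by the residue mod `n`. -/
private lemma fw_chain {β : Type*} (n L : ℕ) (f : ℕ → β) (h1 : 1 ≤ n)
    (hp : ∀ i, i + n < L → f i = f (i + n)) : ∀ i, i < L → f i = f (i % n) := by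
  intro i
  induction i using Nat.strong_induction_on with
  | _ i ih =>
    intro hi
    rcases lt_or_ge i n with h | h
    · rw [Nat.mod_eq_of_lt h]
    · have h2 : i - n + n = i := Nat.sub_add_cancel h
      have e := hp (i - n) (by omega)
      rw [h2] at e
      rw [← e, ih (i - n) (by omega) (by omega), Nat.mod_eq_sub_mod h]

/-- Arithmetic core of Fine–Wilf: periods `n` and `m` on a domain of size
at least `n + m - gcd n m` force period `gcd n m`. -/
private lemma fw_key {β : Type*} : ∀ (N n m L : ℕ) (f : ℕ → β), n + m ≤ N → 1 ≤ n → n ≤ m →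
    (∀ i, i + n < L → f i = f (i + n)) →
    (∀ i, i + m < L → f i = f (i + m)) →
    n + m - Nat.gcd n m ≤ L → ∀ i, i < L → f i = f (i % Nat.gcd n m) := by
  intro N
  induction N with
  | zero => intro n m L f hN h1; omega
  | succ N ih =>
    intro n m L f hN h1 hnm hpn hpm hL i hi
    rcases eq_or_lt_of_le hnm with heq | hlt
    · subst heq
      rw [Nat.gcd_self]
      exact fw_chain n L f h1 hpn i hi
    · set d := Nat.gcd n m with hd
      set m' := m - n with hm'
      have hgcd : Nat.gcd n m' = d := by
        rw [hm', Nat.gcd_sub_self_right (le_of_lt hlt)]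
      have hm'1 : 1 ≤ m' := by omega
      have hdm' : d ≤ m' := Nat.le_of_dvd hm'1 (hgcd ▸ Nat.gcd_dvd_right n m')
      have hdn : d ∣ n := Nat.gcd_dvd_left n m
      have hdn' : d ≤ n := Nat.le_of_dvd h1 hdn
      have hLL : m - d ≤ L := by omega
      -- f has period m' on the prefix of length m - d
      have hpm' : ∀ j, j + m' < m - d → f j = f (j + m') := by
        intro j hj
        rcases le_or_gt n j with h | h
        · obtain ⟨k, rfl⟩ : ∃ k, j = k + n := ⟨j - n, by omega⟩
          have e1 := hpn k (by omega)
          have e2 := hpm k (by omega)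
          have e3 : k + n + m' = k + m := by omega
          rw [e3, ← e2, ← e1]
        · have hjd : j < n - d := by omega
          have e1 := hpm j (by omega)
          have e2 := hpn (j + m') (by omega)
          have e3 : j + m' + n = j + m := by omega
          rw [e3] at e2
          rw [e1, e2]
      -- recurse
      have hrec : ∀ j, j < m - d → f j = f (j % d) := by
        rcases le_total n m' with hor | hor
        · intro j hj
          have := ih n m' (m - d) f (by omega) h1 hor
            (fun i h => hpn i (by omega)) hpm' (by rw [hgcd]; omega) j hj
          rwa [hgcd] at this
        · intro j hj
          have := ih m' n (m - d) f (by omega) hm'1 hor hpm'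
            (fun i h => hpn i (by omega))
            (by rw [Nat.gcd_comm, hgcd]; omega) j hj
          rwa [Nat.gcd_comm, hgcd] at this
      have hchain := fw_chain n L f h1 hpn
      have h1' : i % n < n := Nat.mod_lt _ h1
      rw [hchain i hi, hrec (i % n) (by omega), Nat.mod_mod_of_dvd _ hdn]

/-- Entries of a power of a free monoid element. -/
private lemma fw_pow_getElem? {α : Type*} (x : FreeMonoid α) (p : ℕ) :
    ∀ i, i < p * x.length → (x ^ p).toList[i]? = x.toList[i % x.length]? := by
  induction p with
  | zero => intro i hi; omega
  | succ p ih =>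
    intro i hi
    rw [Nat.succ_mul] at hi
    rw [pow_succ', FreeMonoid.toList_mul]
    rcases lt_or_ge i x.length with h | h
    · rw [List.getElem?_append_left (show i < x.toList.length from h), Nat.mod_eq_of_lt h]
    · rw [List.getElem?_append_right (show x.toList.length ≤ i from h)]
      have hl : x.toList.length = x.length := rfl
      rw [hl, ih (i - x.length) (by omega), Nat.mod_eq_sub_mod h]

private lemma fw_length_pow {α : Type*} (x : FreeMonoid α) (p : ℕ) :
    (x ^ p).length = p * x.length := by
  induction p with
  | zero => simp [FreeMonoid.length_one]
  | succ p ih => rw [pow_succ, FreeMonoid.length_mul, ih]; ring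

/-- Assembly step: a word whose entries are `d`-periodic and agree with a prefix `w`
is the corresponding power of the length-`d` prefix of `w`. -/
private lemma fw_eq_pow {α : Type*} (x w : FreeMonoid α) {d : ℕ}
    (hn1 : 0 < x.length) (hd1 : 1 ≤ d) (hdn : d ∣ x.length) (hnL : x.length ≤ w.length)
    (main : ∀ i, i < w.length → w.toList[i]? = w.toList[i % d]?)
    (key1 : ∀ i, i < w.length → w.toList[i]? = x.toList[i % x.length]?) :
    x = FreeMonoid.ofList (w.toList.take d) ^ (x.length / d) := by
  have hwl : w.toList.length = w.length := rfl
  have hdL : d ≤ w.length := le_trans (Nat.le_of_dvd hn1 hdn) hnL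
  have hzlen : (FreeMonoid.ofList (w.toList.take d)).length = d := by
    show (w.toList.take d).length = d
    rw [List.length_take, hwl]
    omega
  apply FreeMonoid.toList.injective
  apply List.ext_getElem?
  intro i
  rcases lt_or_ge i x.length with hi | hi
  · rw [fw_pow_getElem? _ _ i (by rw [hzlen, Nat.div_mul_cancel hdn]; exact hi), hzlen]
    show (x.toList)[i]? = (w.toList.take d)[i % d]?
    rw [List.getElem?_take_of_lt (Nat.mod_lt _ hd1),
      ← main i (by omega), key1 i (by omega), Nat.mod_eq_of_lt hi]
  · rw [List.getElem?_eq_none (show x.toList.length ≤ i from hi),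
      List.getElem?_eq_none]
    show (FreeMonoid.ofList (w.toList.take d) ^ (x.length / d)).length ≤ i
    rw [fw_length_pow, hzlen, Nat.div_mul_cancel hdn]
    exact hi

/-- **Fine–Wilf theorem** (Lothaire, Proposition 1.3.5).  If `x` and `y` are elements of
the free monoid on an alphabet `α`, of lengths `n` and `m` with `d = gcd n m`, and some
powers `x ^ p` and `y ^ q` have a common left factor of length at least `n + m - d`, then
`x` and `y` are powers of a single element of the free monoid. -/
theorem fine_wilf {α : Type*} (x y : FreeMonoid α) (p q : ℕ) (w : FreeMonoid α)
    (hwx : ∃ x', x ^ p = w * x') (hwy : ∃ y', y ^ q = w * y')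
    (hlen : x.length + y.length - Nat.gcd x.length y.length ≤ w.length) :
    ∃ (z : FreeMonoid α) (i j : ℕ), x = z ^ i ∧ y = z ^ j := by
  obtain ⟨x', hx'⟩ := hwx
  obtain ⟨y', hy'⟩ := hwy
  rcases Nat.eq_zero_or_pos x.length with h0 | hn1
  · refine ⟨y, 0, 1, ?_, (pow_one y).symm⟩
    rw [pow_zero]
    exact FreeMonoid.length_eq_zero.mp h0
  rcases Nat.eq_zero_or_pos y.length with h0 | hm1
  · refine ⟨x, 1, 0, (pow_one x).symm, ?_⟩
    rw [pow_zero]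
    exact FreeMonoid.length_eq_zero.mp h0
  have hdn : Nat.gcd x.length y.length ∣ x.length := Nat.gcd_dvd_left _ _
  have hdm : Nat.gcd x.length y.length ∣ y.length := Nat.gcd_dvd_right _ _
  have hdn' : Nat.gcd x.length y.length ≤ x.length := Nat.le_of_dvd hn1 hdn
  have hdm' : Nat.gcd x.length y.length ≤ y.length := Nat.le_of_dvd hm1 hdm
  have hd1 : 1 ≤ Nat.gcd x.length y.length := Nat.gcd_pos_of_pos_left _ hn1
  have hnL : x.length ≤ w.length := by omega
  have hmL : y.length ≤ w.length := by omega
  have hLx : w.length ≤ p * x.length := by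
    have h := congrArg FreeMonoid.length hx'
    rw [fw_length_pow, FreeMonoid.length_mul] at h
    omega
  have hLy : w.length ≤ q * y.length := by
    have h := congrArg FreeMonoid.length hy'
    rw [fw_length_pow, FreeMonoid.length_mul] at h
    omega
  have hwl : w.toList.length = w.length := rfl
  have key1 : ∀ i, i < w.length → w.toList[i]? = x.toList[i % x.length]? := by
    intro i hi
    have h' : (x ^ p).toList = w.toList ++ x'.toList := by
      rw [hx']; rfl
    rw [← fw_pow_getElem? x p i (by omega), h',
      List.getElem?_append_left (by rw [hwl]; exact hi)]
  have key2 : ∀ i, i < w.length → w.toList[i]? = y.toList[i % y.length]? := by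
    intro i hi
    have h' : (y ^ q).toList = w.toList ++ y'.toList := by
      rw [hy']; rfl
    rw [← fw_pow_getElem? y q i (by omega), h',
      List.getElem?_append_left (by rw [hwl]; exact hi)]
  have per_n : ∀ i, i + x.length < w.length → w.toList[i]? = w.toList[i + x.length]? := by
    intro i h
    rw [key1 i (by omega), key1 (i + x.length) h, Nat.add_mod_right]
  have per_m : ∀ i, i + y.length < w.length → w.toList[i]? = w.toList[i + y.length]? := by
    intro i h
    rw [key2 i (by omega), key2 (i + y.length) h, Nat.add_mod_right]
  have main : ∀ i, i < w.length →
      w.toList[i]? = w.toList[i % Nat.gcd x.length y.length]? := by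
    rcases le_total x.length y.length with h | h
    · exact fw_key (x.length + y.length) x.length y.length w.length _ le_rfl hn1 h
        per_n per_m hlen
    · intro i hi
      have h2 := fw_key (x.length + y.length) y.length x.length w.length _ (by omega)
        hm1 h per_m per_n (by rw [Nat.gcd_comm]; omega) i hi
      rwa [Nat.gcd_comm] at h2
  refine ⟨FreeMonoid.ofList (w.toList.take (Nat.gcd x.length y.length)),
    x.length / Nat.gcd x.length y.length, y.length / Nat.gcd x.length y.length, ?_, ?_⟩
  · apply fw_eq_pow x w hn1 hd1 hdn hnL main key1
  · apply fw_eq_pow y w hm1 hd1 hdm hmL main key2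
end

section
/- Let u and v be nonempty words over an alphabet such that u and v are not both powers of a common word, and suppose the last letters of u and v are distinct. Then for every n ≥ 3, the word (uv)^n u is primitive, i.e. it is not of the form w^t for any word w and integer t ≥ 2. -/
/-!
If `(uv)^n u = z^t` with `t ≥ 2` and `n ≥ 3`, this word has the two periods `|z|` and `|uv|`,
and it is long enough (at least `|z| + |uv|`) for the Fine–Wilf periodicity lemma to give the
period `g = gcd |z| |uv|`. Since `g` divides the length of the word, it divides `|u|` and `|v|`,
so the prefixes `u` and `uv` are powers of the prefix of length `g`, and hence so are `u` and `v`.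
-/

namespace List

variable {α : Type*} {w : List α} {p : ℕ}

theorem HasPeriod.take_drop_mul (per : w.HasPeriod p) {k : ℕ} (hk : p * (k + 1) ≤ w.length) :
    (w.drop (p * k)).take p = w.take p := by
  refine ext_getElem? fun i => ?_
  rcases lt_or_ge i p with hi | hi
  · rw [getElem?_take_of_lt hi, getElem?_take_of_lt hi, getElem?_drop,
      ← per.getElem?_mod _ _ _ (by rw [Nat.mul_succ] at hk; omega), Nat.mul_add_mod,
      Nat.mod_eq_of_lt hi]
  · simp [hi]

theorem HasPeriod.ofList_take_mul (per : w.HasPeriod p) {k : ℕ} (hk : p * k ≤ w.length) :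
    FreeMonoid.ofList (w.take (p * k)) = FreeMonoid.ofList (w.take p) ^ k := by
  induction k with
  | zero => rfl
  | succ k ih =>
    rw [Nat.mul_succ, take_add, FreeMonoid.ofList_append,
      ih (le_trans (Nat.mul_le_mul_left p k.le_succ) hk), per.take_drop_mul hk, pow_succ]

theorem HasPeriod.ofList_eq_pow_of_prefix (per : w.HasPeriod p) {l : List α} (hl : l <+: w)
    {k : ℕ} (hlen : l.length = p * k) : FreeMonoid.ofList l = FreeMonoid.ofList (w.take p) ^ k := by
  rw [prefix_iff_eq_take.mp hl, hlen, per.ofList_take_mul (hlen ▸ hl.length_le)]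

end List

namespace FreeMonoid

variable {α : Type*}

theorem length_pow (x : FreeMonoid α) (k : ℕ) : (x ^ k).length = k * x.length := by
  induction k with
  | zero => rw [pow_zero, zero_mul, length_one]
  | succ k ih => rw [pow_succ, length_mul, ih, Nat.succ_mul]

theorem hasPeriod_toList_pow (x : FreeMonoid α) (k : ℕ) : (x ^ k).toList.HasPeriod x.length := by
  cases k with
  | zero => exact List.hasPeriod_empty _
  | succ k =>
    rw [List.HasPeriod, pow_succ', toList_mul, length, List.take_left,
      List.prefix_append_right_inj, ← toList_mul, ← pow_succ', pow_succ]
    exact List.prefix_append _ _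

theorem exists_pow_eq_of_hasPeriod {w : List α} {p : ℕ} (per : w.HasPeriod p) {x y : FreeMonoid α}
    (hxy : (x * y).toList <+: w) (hx : p ∣ x.length) (hy : p ∣ y.length) :
    ∃ (r : FreeMonoid α) (i j : ℕ), x = r ^ i ∧ y = r ^ j := by
  obtain ⟨i, hi⟩ := hx
  obtain ⟨j, hj⟩ := hy
  have hx : x = ofList (w.take p) ^ i :=
    per.ofList_eq_pow_of_prefix ((List.prefix_append _ _).trans hxy) hi
  have hxy : x * y = ofList (w.take p) ^ (i + j) :=
    per.ofList_eq_pow_of_prefix hxy (by rw [← length, length_mul, hi, hj, mul_add])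
  refine ⟨_, i, j, hx, mul_left_cancel (a := x) ?_⟩
  rw [hxy, pow_add, ← hx]

end FreeMonoid

/-- An element of a free monoid is primitive if it is nonempty and not of the form `w ^ t`
with `t ≥ 2`. -/
def FreeMonoid.Primitive {α : Type*} (w : FreeMonoid α) : Prop :=
  w ≠ 1 ∧ ¬ ∃ (z : FreeMonoid α) (t : ℕ), 2 ≤ t ∧ w = z ^ t

open FreeMonoid

theorem power_word_primitive_general {α : Type*} (u v : FreeMonoid α)
    (hcommon : ¬ ∃ (z : FreeMonoid α) (i j : ℕ), u = z ^ i ∧ v = z ^ j) :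
    ∀ n : ℕ, 3 ≤ n → FreeMonoid.Primitive ((u * v) ^ n * u) := by
  intro n hn
  set W := (u * v) ^ n * u
  have hW : W.length = n * (u * v).length + u.length := by rw [length_mul, length_pow]
  suffices hnotpow : ¬ ∃ (z : FreeMonoid α) (t : ℕ), 2 ≤ t ∧ W = z ^ t from
    ⟨fun h => hnotpow ⟨1, 2, le_rfl, h.trans (one_pow 2).symm⟩, hnotpow⟩
  rintro ⟨z, t, ht, hzt⟩
  have hWz : W.length = t * z.length := by rw [hzt, length_pow]
  have per_z : W.toList.HasPeriod z.length := hzt ▸ hasPeriod_toList_pow z t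
  have hW_prefix : W.toList <+: ((u * v) ^ (n + 1)).toList := ⟨v.toList, by
    rw [pow_succ, ← mul_assoc]; rfl⟩
  have per_uv : W.toList.HasPeriod (u * v).length :=
    (hasPeriod_toList_pow (u * v) (n + 1)).infix hW_prefix.isInfix
  have hlong : z.length + (u * v).length ≤ W.length := by nlinarith
  have per_gcd := per_z.gcd per_uv (Nat.sub_le_of_le_add (Nat.le_add_right_of_le hlong))
  set g := z.length.gcd (u * v).length
  have hg_uv : g ∣ (u * v).length := Nat.gcd_dvd_right _ _
  have hg_u : g ∣ u.length := by
    rw [← Nat.dvd_add_right (hg_uv.mul_left n), ← hW, hWz]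
    exact (Nat.gcd_dvd_left _ _).mul_left t
  have hg_v : g ∣ v.length := (Nat.dvd_add_right hg_u).mp (length_mul u v ▸ hg_uv)
  have huv_prefix : (u * v).toList <+: W.toList := ⟨((u * v) ^ (n - 1) * u).toList, by
    rw [← toList_mul, ← mul_assoc, ← pow_succ', Nat.sub_add_cancel (by omega)]⟩
  exact hcommon (exists_pow_eq_of_hasPeriod per_gcd huv_prefix hg_u hg_v)

/-- Let `u` and `v` be nonempty words which are not both powers of a common word and whose
last letters are distinct.  Then for every `n ≥ 3` the word `(uv)^n u` is primitive. -/
theorem power_word_primitive {α : Type*} (u v : FreeMonoid α)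
    (hu : u ≠ 1) (hv : v ≠ 1)
    (hcommon : ¬ ∃ (z : FreeMonoid α) (i j : ℕ), u = z ^ i ∧ v = z ^ j)
    (hlast : (FreeMonoid.toList u).getLast? ≠ (FreeMonoid.toList v).getLast?) :
    ∀ n : ℕ, 3 ≤ n → FreeMonoid.Primitive ((u * v) ^ n * u) :=
  power_word_primitive_general u v hcommon
end

section
/- Let Q be a finite quiver containing three arrows α, β, γ with a common target vertex i, and let A = kQ/I with I admissible. Then there exists a short exact sequence of A-modules 0 → S_i → E₁ ⊕ E₂ ⊕ E₃ → M → 0 where S_i is the simple module at i, each E_t is a 2-dimensional indecomposable module (with dimension 1 at i and 1 at the source of the t-th arrow), and M is an indecomposable 5-dimensional module with dimension vector 2 at i and 1 at each of the sources of α, β, γ. In particular the middle term of this extension of indecomposables has three indecomposable direct summands. -/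
open Module

/-- A representation of a quiver `V` over a field `k`: a vector space at each vertex and a
linear map along each arrow.  For an admissible ideal `I` of the path algebra `kQ`,
representations on which all paths in `I` act as zero are exactly the `kQ/I`-modules. -/
structure QRep (k : Type) [Field k] (V : Type) [Quiver V] where
  carrier : V → Type
  [acg : ∀ v, AddCommGroup (carrier v)]
  [mod : ∀ v, Module k (carrier v)]
  map : ∀ {a b : V}, (a ⟶ b) → (carrier a →ₗ[k] carrier b)

attribute [instance] QRep.acg QRep.mod

variable {k : Type} [Field k] {V : Type} [Quiver V]

/-- The action of a path on a representation. -/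
def QRep.pathMap (X : QRep k V) : ∀ {a b : V},
    Quiver.Path a b → (X.carrier a →ₗ[k] X.carrier b)
  | _, _, Quiver.Path.nil => LinearMap.id
  | _, _, Quiver.Path.cons p h => (X.map h).comp (X.pathMap p)

/-- The representation is a module over `kQ/I`: all paths in `I` act as zero. -/
def QRep.SatisfiesRelations (X : QRep k V) (I : ∀ {a b : V}, Quiver.Path a b → Prop) :
    Prop :=
  ∀ (a b : V) (p : Quiver.Path a b), I p → X.pathMap p = 0

/-- A subrepresentation, given by a submodule at each vertex stable under the arrows. -/
def QRep.IsSubrep (X : QRep k V) (W : ∀ v, Submodule k (X.carrier v)) : Prop :=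
  ∀ (a b : V) (h : a ⟶ b), (W a).map (X.map h) ≤ W b

/-- An indecomposable representation: nonzero and not a direct sum of two nonzero
subrepresentations. -/
def QRep.Indecomposable (X : QRep k V) : Prop :=
  (∃ v, (⊤ : Submodule k (X.carrier v)) ≠ ⊥) ∧
    ∀ W₁ W₂ : ∀ v, Submodule k (X.carrier v), X.IsSubrep W₁ → X.IsSubrep W₂ →
      (∀ v, W₁ v ⊔ W₂ v = ⊤) → (∀ v, W₁ v ⊓ W₂ v = ⊥) →
      (∀ v, W₁ v = ⊥) ∨ (∀ v, W₂ v = ⊥)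

/-- A morphism of representations. -/
structure QHom (X Y : QRep k V) where
  app : ∀ v, X.carrier v →ₗ[k] Y.carrier v
  comm : ∀ (a b : V) (h : a ⟶ b), (Y.map h).comp (app a) = (app b).comp (X.map h)

/-- The direct sum of three representations. -/
def QRep.prod3 (X Y Z : QRep k V) : QRep k V where
  carrier v := X.carrier v × Y.carrier v × Z.carrier v
  map h := (X.map h).prodMap ((Y.map h).prodMap (Z.map h))

/-!
All modules involved have radical square zero: each is `S ⊕ T` with every arrow killing `S` and
mapping the top `T` into `S`, so paths of length at least two act as zero and the relations of an
admissible ideal hold. `M` is the cokernel of `S_i → E₁ ⊕ E₂ ⊕ E₃`, `s ↦ (s, s, -s)`: its socle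
is `k²` at `i`, and `α`, `β`, `γ` map the top onto the lines through `(1,0)`, `(0,1)` and `(1,1)`.
In a decomposition `M = W₁ ⊕ W₂` the image of each arrow, a line, is the sum of the images of
the two summands, so it lies in one of them; two of the three lines, and hence the whole socle,
lie in the same summand. The arrows detect the top, so the other summand meets neither socle nor
top: it is zero. The same argument, with a single line, shows that each `E_t` is indecomposable.
-/

theorem Submodule.both_mem_or_both_mem_of_add {R M : Type} [Ring R] [AddCommGroup M]
    [Module R M] {U₁ U₂ : Submodule R M} {x y : M} (hx : x ∈ U₁ ∨ x ∈ U₂) (hy : y ∈ U₁ ∨ y ∈ U₂)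
    (hxy : x + y ∈ U₁ ∨ x + y ∈ U₂) : (x ∈ U₁ ∧ y ∈ U₁) ∨ (x ∈ U₂ ∧ y ∈ U₂) := by
  rcases hx with hx | hx <;> rcases hy with hy | hy
  · exact Or.inl ⟨hx, hy⟩
  · rcases hxy with h | h
    · exact Or.inl ⟨hx, (U₁.add_mem_iff_right hx).1 h⟩
    · exact Or.inr ⟨(U₂.add_mem_iff_left hy).1 h, hy⟩
  · rcases hxy with h | h
    · exact Or.inl ⟨(U₁.add_mem_iff_left hy).1 h, hy⟩
    · exact Or.inr ⟨hx, (U₂.add_mem_iff_right hx).1 h⟩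
  · exact Or.inr ⟨hx, hy⟩

-- `PLift (v = i) → N` is `N` at the vertex `i` and `0` elsewhere.
theorem finrank_plift_fun (P : Prop) [Decidable P] (N : Type) [AddCommGroup N] [Module k N] :
    finrank k (PLift P → N) = if P then finrank k N else 0 := by
  split_ifs with hP
  · have : Unique (PLift P) := ⟨⟨⟨hP⟩⟩, fun _ => rfl⟩
    exact (LinearEquiv.funUnique (PLift P) k N).finrank_eq
  · have : IsEmpty (PLift P) := ⟨fun p => hP p.down⟩
    exact finrank_zero_of_subsingleton

theorem mk_zero_mem_of_forall_const_mem {ι : Type} {i : ι} {N : Type} [AddCommGroup N]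
    [Module k N] {T : ι → Type} [∀ v, AddCommGroup (T v)] [∀ v, Module k (T v)]
    {W : ∀ v, Submodule k ((PLift (v = i) → N) × T v)}
    (hW : ∀ n : N, ((fun _ => n, 0) : (PLift (i = i) → N) × T i) ∈ W i)
    (v : ι) (s : PLift (v = i) → N) : ((s, 0) : (PLift (v = i) → N) × T v) ∈ W v := by
  by_cases hv : v = i
  · subst hv
    exact hW (s ⟨rfl⟩)
  · obtain rfl : s = 0 := funext fun p => absurd p.down hv
    exact (W v).zero_mem

namespace QRep

theorem pathMap_eq_zero_of_two_le_length (X : QRep k V)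
    (hX : ∀ {a b c : V} (h : a ⟶ b) (h' : b ⟶ c), X.map h' ∘ₗ X.map h = 0) :
    ∀ {a b : V} (p : Quiver.Path a b), 2 ≤ p.length → X.pathMap p = 0
  | _, _, .nil, hp => absurd hp (by simp)
  | _, _, .cons .nil _, hp => absurd hp (by simp)
  | _, _, .cons (.cons _ h₀) h, _ => by
    rw [pathMap, pathMap, ← LinearMap.comp_assoc, hX h₀ h, LinearMap.zero_comp]

theorem satisfiesRelations_of_map_comp_map (X : QRep k V)
    (hX : ∀ {a b c : V} (h : a ⟶ b) (h' : b ⟶ c), X.map h' ∘ₗ X.map h = 0)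
    {I : ∀ {a b : V}, Quiver.Path a b → Prop}
    (hI : ∀ (a b : V) (p : Quiver.Path a b), I p → 2 ≤ p.length) : X.SatisfiesRelations I :=
  fun a b p hp => X.pathMap_eq_zero_of_two_le_length hX p (hI a b p hp)

theorem IsSubrep.mem_or_mem_of_map_eq_smul {X : QRep k V} {W₁ W₂ : ∀ v, Submodule k (X.carrier v)}
    (h₁ : X.IsSubrep W₁) (h₂ : X.IsSubrep W₂) {a b : V} (hsup : W₁ a ⊔ W₂ a = ⊤) (h : a ⟶ b)
    {ψ : X.carrier a →ₗ[k] k} (hψ : Function.Surjective ψ) {u : X.carrier b}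
    (hmap : ∀ x, X.map h x = ψ x • u) : u ∈ W₁ b ∨ u ∈ W₂ b := by
  obtain ⟨x, hx⟩ := hψ 1
  obtain ⟨y, hy, z, hz, rfl⟩ := Submodule.mem_sup.1 (hsup ▸ Submodule.mem_top : x ∈ W₁ a ⊔ W₂ a)
  have hy' : ψ y • u ∈ W₁ b := hmap y ▸ h₁ a b h (Submodule.mem_map_of_mem hy)
  have hz' : ψ z • u ∈ W₂ b := hmap z ▸ h₂ a b h (Submodule.mem_map_of_mem hz)
  by_cases hψy : ψ y = 0
  · rw [map_add, hψy, zero_add] at hx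
    exact Or.inr (by simpa [hx] using hz')
  · exact Or.inl (by simpa [smul_smul, hψy] using (W₁ b).smul_mem (ψ y)⁻¹ hy')

section RadSqZero

variable {S T : V → Type} [∀ v, AddCommGroup (S v)] [∀ v, Module k (S v)]
  [∀ v, AddCommGroup (T v)] [∀ v, Module k (T v)]

abbrev ofRadSqZero (φ : ∀ {a b : V}, (a ⟶ b) → T a →ₗ[k] S b) : QRep k V where
  carrier v := S v × T v
  map h := LinearMap.inl k _ _ ∘ₗ φ h ∘ₗ LinearMap.snd k _ _

variable (φ : ∀ {a b : V}, (a ⟶ b) → T a →ₗ[k] S b)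

theorem ofRadSqZero_map_comp_map {a b c : V} (h : a ⟶ b) (h' : b ⟶ c) :
    (ofRadSqZero φ).map h' ∘ₗ (ofRadSqZero φ).map h = 0 :=
  LinearMap.ext fun x => by simp

theorem ofRadSqZero_mem_or_mem {W₁ W₂ : ∀ v, Submodule k ((ofRadSqZero φ).carrier v)}
    (h₁ : (ofRadSqZero φ).IsSubrep W₁) (h₂ : (ofRadSqZero φ).IsSubrep W₂) {a b : V}
    (hsup : W₁ a ⊔ W₂ a = ⊤) (h : a ⟶ b) {ψ : T a →ₗ[k] k} (hψ : Function.Surjective ψ)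
    {s : S b} (hφ : ∀ t, φ h t = ψ t • s) : ((s, 0) : S b × T b) ∈ W₁ b ∨ (s, 0) ∈ W₂ b :=
  h₁.mem_or_mem_of_map_eq_smul h₂ hsup h (ψ := ψ ∘ₗ LinearMap.snd k _ _)
    (hψ.comp LinearMap.snd_surjective) fun x => by simp [hφ]

variable {φ}

theorem ofRadSqZero_eq_bot_of_socle_mem (hφ : ∀ a (t : T a), (∀ b (h : a ⟶ b), φ h t = 0) → t = 0)
    {W W' : ∀ v, Submodule k ((ofRadSqZero φ).carrier v)} (hW' : (ofRadSqZero φ).IsSubrep W')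
    (hinf : ∀ v, W v ⊓ W' v = ⊥) (hsoc : ∀ v (s : S v), ((s, 0) : S v × T v) ∈ W v) (v : V) :
    W' v = ⊥ := by
  refine (Submodule.eq_bot_iff _).2 fun x hx => ?_
  have mem_inf {b : V} {y} (hy : y ∈ W b) (hy' : y ∈ W' b) : y = 0 := by
    simpa [hinf b] using Submodule.mem_inf.2 ⟨hy, hy'⟩
  have htop : x.2 = 0 := hφ v x.2 fun b h => by
    simpa using mem_inf (hsoc b (φ h x.2)) (hW' v b h (Submodule.mem_map_of_mem hx))
  exact mem_inf (by simpa [← htop] using hsoc v x.1) hx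

theorem ofRadSqZero_indecomposable (hφ : ∀ a (t : T a), (∀ b (h : a ⟶ b), φ h t = 0) → t = 0)
    (i : V) [Nontrivial (S i)]
    (hsoc : ∀ W₁ W₂ : ∀ v, Submodule k ((ofRadSqZero φ).carrier v),
      (ofRadSqZero φ).IsSubrep W₁ → (ofRadSqZero φ).IsSubrep W₂ → (∀ v, W₁ v ⊔ W₂ v = ⊤) →
      (∀ v (s : S v), ((s, 0) : S v × T v) ∈ W₁ v) ∨ ∀ v (s : S v), ((s, 0) : S v × T v) ∈ W₂ v) :
    (ofRadSqZero φ).Indecomposable := by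
  refine ⟨⟨i, top_ne_bot⟩, fun W₁ W₂ h₁ h₂ hsup hinf => ?_⟩
  rcases hsoc W₁ W₂ h₁ h₂ hsup with hW₁ | hW₂
  · exact Or.inr (ofRadSqZero_eq_bot_of_socle_mem hφ h₂ hinf hW₁)
  · exact Or.inl
      (ofRadSqZero_eq_bot_of_socle_mem hφ h₁ (fun v => inf_comm (W₁ v) (W₂ v) ▸ hinf v) hW₂)

end RadSqZero

abbrev simple (k : Type) [Field k] (i : V) : QRep k V where
  carrier v := PLift (v = i) → k
  map _ := 0

theorem finrank_simple [DecidableEq V] (i v : V) :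
    finrank k ((simple k i).carrier v) = if v = i then 1 else 0 := by
  rw [finrank_plift_fun, finrank_self]

open Classical in
noncomputable def arrowDelta {i j : V} (ε : j ⟶ i) {a b : V} (h : a ⟶ b) :
    (PLift (a = j) → k) →ₗ[k] (PLift (b = i) → k) where
  toFun t _ := if hh : (⟨a, b, h⟩ : Σ a b : V, a ⟶ b) = ⟨j, i, ε⟩ then
    t ⟨congrArg Sigma.fst hh⟩ else 0
  map_add' t t' := by funext; split_ifs <;> simp
  map_smul' c t := by funext; split_ifs <;> simp

theorem arrowDelta_self_apply {i j : V} (ε : j ⟶ i) (t : PLift (j = j) → k) (p : PLift (i = i)) :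
    arrowDelta ε ε t p = t ⟨rfl⟩ :=
  dif_pos rfl

theorem arrowDelta_eq_zero {i j a b : V} {ε : j ⟶ i} {h : a ⟶ b}
    (hne : (⟨a, b, h⟩ : Σ a b : V, a ⟶ b) ≠ ⟨j, i, ε⟩) : arrowDelta (k := k) ε h = 0 :=
  LinearMap.ext fun _ => funext fun _ => dif_neg hne

noncomputable abbrev ofArrow {i j : V} (ε : j ⟶ i) : QRep k V :=
  ofRadSqZero (S := fun v => PLift (v = i) → k) (T := fun v => PLift (v = j) → k) (arrowDelta ε)

section OfArrow

variable {i j : V} (ε : j ⟶ i)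

theorem finrank_ofArrow [DecidableEq V] (v : V) :
    finrank k ((ofArrow (k := k) ε).carrier v) =
      (if v = i then 1 else 0) + (if v = j then 1 else 0) := by
  rw [Module.finrank_prod, finrank_plift_fun, finrank_plift_fun, finrank_self]

theorem ofArrow_indecomposable : (ofArrow (k := k) ε).Indecomposable := by
  have : Nonempty (PLift (i = i)) := ⟨⟨rfl⟩⟩
  refine ofRadSqZero_indecomposable (fun a t ht => ?_) i fun W₁ W₂ h₁ h₂ hsup => ?_
  · funext ⟨ha⟩
    subst ha
    simpa [arrowDelta_self_apply] using congrFun (ht i ε) ⟨rfl⟩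
  · have hsoc (W : ∀ v, Submodule k ((ofArrow (k := k) ε).carrier v))
        (hu : (fun _ => 1, 0) ∈ W i) (v : V) (s : PLift (v = i) → k) : (s, 0) ∈ W v :=
      mk_zero_mem_of_forall_const_mem (fun n => by
        convert (W i).smul_mem n hu using 1
        ext <;> simp) v s
    exact (ofRadSqZero_mem_or_mem _ h₁ h₂ (hsup j) ε (ψ := LinearMap.proj ⟨rfl⟩)
      (fun c => ⟨fun _ => c, rfl⟩) fun t => funext fun p => by
        simp [arrowDelta_self_apply]).imp (hsoc W₁) (hsoc W₂)

end OfArrow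

/-- The cokernel of `c ↦ (c, c, -c)`, pointwise on `PLift P`. -/
def pairSum (P : Prop) : (PLift P → k) × (PLift P → k) × (PLift P → k) →ₗ[k] (PLift P → k × k) where
  toFun s p := (s.1 p + s.2.2 p, s.2.1 p + s.2.2 p)
  map_add' s s' := by
    funext p
    ext <;> simp only [Prod.fst_add, Prod.snd_add, Pi.add_apply] <;> abel
  map_smul' c s := by funext p; ext <;> simp [mul_add]

theorem pairSum_eq_zero_iff {P : Prop} (a b c : PLift P → k) :
    pairSum P (a, b, c) = 0 ↔ b = a ∧ c = -a := by
  simp only [pairSum, LinearMap.coe_mk, AddHom.coe_mk, funext_iff, Pi.zero_apply, Prod.ext_iff,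
    Prod.fst_zero, Prod.snd_zero, Pi.neg_apply]
  refine ⟨fun h => ⟨fun p => ?_, fun p => ?_⟩, fun h => fun p => ⟨?_, ?_⟩⟩
  · linear_combination (h p).2 - (h p).1
  · linear_combination (h p).1
  · rw [h.2 p]; ring
  · rw [h.1 p, h.2 p]; ring

theorem sigma_arrow_ne_of_ne {i a b : V} {e : a ⟶ i} {e' : b ⟶ i}
    (h : (⟨a, e⟩ : Σ v : V, v ⟶ i) ≠ ⟨b, e'⟩) : (⟨a, i, e⟩ : Σ a b : V, a ⟶ b) ≠ ⟨b, i, e'⟩ := by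
  rintro ⟨⟩
  exact h rfl

section ThreeArrows

variable {i j₁ j₂ j₃ : V} (α : j₁ ⟶ i) (β : j₂ ⟶ i) (γ : j₃ ⟶ i)

noncomputable def threeArrowDelta {a b : V} (h : a ⟶ b) :
    (PLift (a = j₁) → k) × (PLift (a = j₂) → k) × (PLift (a = j₃) → k) →ₗ[k]
      (PLift (b = i) → k × k) :=
  pairSum _ ∘ₗ (arrowDelta α h).prodMap ((arrowDelta β h).prodMap (arrowDelta γ h))

noncomputable abbrev ofThreeArrows : QRep k V :=
  ofRadSqZero (threeArrowDelta (k := k) α β γ)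

theorem finrank_ofThreeArrows [DecidableEq V] (v : V) :
    finrank k ((ofThreeArrows (k := k) α β γ).carrier v) = (if v = i then 2 else 0) +
      (if v = j₁ then 1 else 0) + (if v = j₂ then 1 else 0) + (if v = j₃ then 1 else 0) := by
  simp only [Module.finrank_prod, finrank_plift_fun, finrank_self]
  split_ifs <;> rfl

variable {α β γ}

theorem threeArrowDelta_first (hαβ : (⟨j₁, α⟩ : Σ v : V, v ⟶ i) ≠ ⟨j₂, β⟩)
    (hαγ : (⟨j₁, α⟩ : Σ v : V, v ⟶ i) ≠ ⟨j₃, γ⟩)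
    (t : (PLift (j₁ = j₁) → k) × (PLift (j₁ = j₂) → k) × (PLift (j₁ = j₃) → k)) :
    threeArrowDelta α β γ α t = t.1 ⟨rfl⟩ • fun _ => ((1 : k), (0 : k)) := by
  funext p
  simp [threeArrowDelta, pairSum, arrowDelta_self_apply,
    arrowDelta_eq_zero (sigma_arrow_ne_of_ne hαβ), arrowDelta_eq_zero (sigma_arrow_ne_of_ne hαγ)]

theorem threeArrowDelta_second (hαβ : (⟨j₁, α⟩ : Σ v : V, v ⟶ i) ≠ ⟨j₂, β⟩)
    (hβγ : (⟨j₂, β⟩ : Σ v : V, v ⟶ i) ≠ ⟨j₃, γ⟩)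
    (t : (PLift (j₂ = j₁) → k) × (PLift (j₂ = j₂) → k) × (PLift (j₂ = j₃) → k)) :
    threeArrowDelta α β γ β t = t.2.1 ⟨rfl⟩ • fun _ => ((0 : k), (1 : k)) := by
  funext p
  simp [threeArrowDelta, pairSum, arrowDelta_self_apply,
    arrowDelta_eq_zero (sigma_arrow_ne_of_ne hαβ).symm,
    arrowDelta_eq_zero (sigma_arrow_ne_of_ne hβγ)]

theorem threeArrowDelta_third (hαγ : (⟨j₁, α⟩ : Σ v : V, v ⟶ i) ≠ ⟨j₃, γ⟩)
    (hβγ : (⟨j₂, β⟩ : Σ v : V, v ⟶ i) ≠ ⟨j₃, γ⟩)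
    (t : (PLift (j₃ = j₁) → k) × (PLift (j₃ = j₂) → k) × (PLift (j₃ = j₃) → k)) :
    threeArrowDelta α β γ γ t = t.2.2 ⟨rfl⟩ • fun _ => ((1 : k), (1 : k)) := by
  funext p
  simp [threeArrowDelta, pairSum, arrowDelta_self_apply,
    arrowDelta_eq_zero (sigma_arrow_ne_of_ne hαγ).symm,
    arrowDelta_eq_zero (sigma_arrow_ne_of_ne hβγ).symm]

theorem threeArrowDelta_faithful (hαβ : (⟨j₁, α⟩ : Σ v : V, v ⟶ i) ≠ ⟨j₂, β⟩)
    (hαγ : (⟨j₁, α⟩ : Σ v : V, v ⟶ i) ≠ ⟨j₃, γ⟩) (hβγ : (⟨j₂, β⟩ : Σ v : V, v ⟶ i) ≠ ⟨j₃, γ⟩)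
    (a : V) (t : (PLift (a = j₁) → k) × (PLift (a = j₂) → k) × (PLift (a = j₃) → k))
    (ht : ∀ b (h : a ⟶ b), threeArrowDelta α β γ h t = 0) : t = 0 := by
  refine Prod.ext (funext fun ⟨ha⟩ => ?_) (Prod.ext (funext fun ⟨ha⟩ => ?_) (funext fun ⟨ha⟩ => ?_))
  · subst ha
    simpa [threeArrowDelta_first hαβ hαγ] using congrArg Prod.fst (congrFun (ht i α) ⟨rfl⟩)
  · subst ha
    simpa [threeArrowDelta_second hαβ hβγ] using congrArg Prod.snd (congrFun (ht i β) ⟨rfl⟩)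
  · subst ha
    simpa [threeArrowDelta_third hαγ hβγ] using congrArg Prod.fst (congrFun (ht i γ) ⟨rfl⟩)

theorem ofThreeArrows_indecomposable (hαβ : (⟨j₁, α⟩ : Σ v : V, v ⟶ i) ≠ ⟨j₂, β⟩)
    (hαγ : (⟨j₁, α⟩ : Σ v : V, v ⟶ i) ≠ ⟨j₃, γ⟩) (hβγ : (⟨j₂, β⟩ : Σ v : V, v ⟶ i) ≠ ⟨j₃, γ⟩) :
    (ofThreeArrows (k := k) α β γ).Indecomposable := by
  have : Nonempty (PLift (i = i)) := ⟨⟨rfl⟩⟩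
  refine ofRadSqZero_indecomposable (threeArrowDelta_faithful hαβ hαγ hβγ) i
    fun W₁ W₂ h₁ h₂ hsup => ?_
  set e₁ : (ofThreeArrows (k := k) α β γ).carrier i := (fun _ => (1, 0), 0)
  set e₂ : (ofThreeArrows (k := k) α β γ).carrier i := (fun _ => (0, 1), 0)
  have he₁ : e₁ ∈ W₁ i ∨ e₁ ∈ W₂ i :=
    ofRadSqZero_mem_or_mem _ h₁ h₂ (hsup j₁) α (ψ := LinearMap.proj ⟨rfl⟩ ∘ₗ LinearMap.fst k _ _)
      (fun c => ⟨(fun _ => c, 0, 0), rfl⟩) (threeArrowDelta_first hαβ hαγ)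
  have he₂ : e₂ ∈ W₁ i ∨ e₂ ∈ W₂ i :=
    ofRadSqZero_mem_or_mem _ h₁ h₂ (hsup j₂) β
      (ψ := LinearMap.proj ⟨rfl⟩ ∘ₗ LinearMap.fst k _ _ ∘ₗ LinearMap.snd k _ _)
      (fun c => ⟨(0, fun _ => c, 0), rfl⟩) (threeArrowDelta_second hαβ hβγ)
  have he₁₂ : e₁ + e₂ ∈ W₁ i ∨ e₁ + e₂ ∈ W₂ i := by
    convert ofRadSqZero_mem_or_mem _ h₁ h₂ (hsup j₃) γ
      (ψ := LinearMap.proj ⟨rfl⟩ ∘ₗ LinearMap.snd k _ _ ∘ₗ LinearMap.snd k _ _)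
      (fun c => ⟨(0, 0, fun _ => c), rfl⟩) (threeArrowDelta_third hαγ hβγ) using 2 <;>
    ext <;> simp [e₁, e₂]
  have hsoc (W : ∀ v, Submodule k ((ofThreeArrows (k := k) α β γ).carrier v))
      (he : e₁ ∈ W i ∧ e₂ ∈ W i) (v : V) (s : PLift (v = i) → k × k) : (s, 0) ∈ W v :=
    mk_zero_mem_of_forall_const_mem (fun n => by
      convert add_mem ((W i).smul_mem n.1 he.1) ((W i).smul_mem n.2 he.2) using 1
      ext <;> simp [e₁, e₂]) v s
  exact (Submodule.both_mem_or_both_mem_of_add he₁ he₂ he₁₂).imp (hsoc W₁) (hsoc W₂)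

variable (α β γ)

noncomputable def simpleToSum :
    QHom (simple k i) ((ofArrow α).prod3 (ofArrow β) (ofArrow γ)) where
  app v := ((LinearMap.inl k _ _).prod
      ((LinearMap.inl k _ _).prod (LinearMap.inl k _ _ ∘ₗ (-LinearMap.id))) :
    (PLift (v = i) → k) →ₗ[k] ((PLift (v = i) → k) × (PLift (v = j₁) → k)) ×
      ((PLift (v = i) → k) × (PLift (v = j₂) → k)) × ((PLift (v = i) → k) × (PLift (v = j₃) → k)))
  comm a b h := LinearMap.ext fun s => by
    change ((arrowDelta α h 0, 0), (arrowDelta β h 0, 0), (arrowDelta γ h 0, 0)) =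
      ((0, 0), (0, 0), (-0, 0))
    simp

noncomputable def sumToThreeArrows :
    QHom ((ofArrow α).prod3 (ofArrow β) (ofArrow γ)) (ofThreeArrows (k := k) α β γ) where
  app _ := (pairSum _ ∘ₗ (LinearMap.fst k _ _).prodMap
      ((LinearMap.fst k _ _).prodMap (LinearMap.fst k _ _))).prod
    ((LinearMap.snd k _ _).prodMap ((LinearMap.snd k _ _).prodMap (LinearMap.snd k _ _)))
  comm _ _ _ := rfl

theorem simpleToSum_injective (v : V) : Function.Injective ((simpleToSum (k := k) α β γ).app v) :=
  fun _ _ h => congrArg (fun x => x.1.1) h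

theorem sumToThreeArrows_surjective (v : V) :
    Function.Surjective ((sumToThreeArrows (k := k) α β γ).app v) := fun y =>
  ⟨((fun p => (y.1 p).1, y.2.1), (fun p => (y.1 p).2, y.2.2.1), (0, y.2.2.2)),
    Prod.ext (funext fun _ => Prod.ext (add_zero _) (add_zero _)) rfl⟩

theorem range_simpleToSum (v : V) :
    LinearMap.range ((simpleToSum (k := k) α β γ).app v) =
      LinearMap.ker ((sumToThreeArrows α β γ).app v) := by
  ext x
  refine ⟨?_, fun hx => ?_⟩
  · rintro ⟨s, rfl⟩
    exact LinearMap.mem_ker.2 (Prod.ext (funext fun _ => Prod.ext (add_neg_cancel _)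
      (add_neg_cancel _)) rfl)
  · obtain ⟨⟨s₁, t₁⟩, ⟨s₂, t₂⟩, ⟨s₃, t₃⟩⟩ := x
    have hs : pairSum (v = i) (s₁, s₂, s₃) = 0 := congrArg Prod.fst (LinearMap.mem_ker.1 hx)
    have ht : ((t₁, t₂, t₃) : _ × _ × _) = 0 := congrArg Prod.snd (LinearMap.mem_ker.1 hx)
    obtain ⟨rfl, rfl⟩ := (pairSum_eq_zero_iff _ _ _).1 hs
    obtain ⟨rfl, rfl, rfl⟩ : t₁ = 0 ∧ t₂ = 0 ∧ t₃ = 0 := by simpa using ht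
    exact ⟨_, rfl⟩

end ThreeArrows

end QRep

open QRep

/-- Let `Q` be a finite quiver containing three (pairwise distinct) arrows `α, β, γ` with
common target `i`, and let `A = kQ/I` with `I` admissible.  Then there is a short exact
sequence of `A`-modules `0 → S_i → E₁ ⊕ E₂ ⊕ E₃ → M → 0` where `S_i` is the simple module
at `i`, each `E_t` is a `2`-dimensional indecomposable with dimension vector supported at
`i` and the source of the `t`-th arrow, and `M` is an indecomposable `5`-dimensional
module with dimension vector `2` at `i` and `1` at each of the sources.  In particular the
middle term of this extension of indecomposables has three indecomposable direct
summands. -/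
theorem three_arrows_middle_term_three_summands
    [Fintype V] [∀ a b : V, Fintype (a ⟶ b)] [DecidableEq V]
    (I : ∀ {a b : V}, Quiver.Path a b → Prop)
    (hadm : ∃ m : ℕ, 2 ≤ m ∧ (∀ (a b : V) (p : Quiver.Path a b), m ≤ p.length → I p) ∧
      (∀ (a b : V) (p : Quiver.Path a b), I p → 2 ≤ p.length))
    (i j₁ j₂ j₃ : V) (α : j₁ ⟶ i) (β : j₂ ⟶ i) (γ : j₃ ⟶ i)
    (hαβ : (⟨j₁, α⟩ : Σ v : V, v ⟶ i) ≠ ⟨j₂, β⟩)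
    (hαγ : (⟨j₁, α⟩ : Σ v : V, v ⟶ i) ≠ ⟨j₃, γ⟩)
    (hβγ : (⟨j₂, β⟩ : Σ v : V, v ⟶ i) ≠ ⟨j₃, γ⟩) :
    ∃ (S E₁ E₂ E₃ M : QRep k V) (f : QHom S (E₁.prod3 E₂ E₃))
      (g : QHom (E₁.prod3 E₂ E₃) M),
      -- all five representations are `A = kQ/I`-modules
      S.SatisfiesRelations I ∧ E₁.SatisfiesRelations I ∧ E₂.SatisfiesRelations I ∧
        E₃.SatisfiesRelations I ∧ M.SatisfiesRelations I ∧
      -- a short exact sequence 0 → S → E₁ ⊕ E₂ ⊕ E₃ → M → 0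
      (∀ v, Function.Injective (f.app v)) ∧
      (∀ v, Function.Surjective (g.app v)) ∧
      (∀ v, LinearMap.range (f.app v) = LinearMap.ker (g.app v)) ∧
      -- S is the simple module at i
      (∀ v, finrank k (S.carrier v) = if v = i then 1 else 0) ∧
      (∀ (a b : V) (h : a ⟶ b), S.map h = 0) ∧
      -- the E_t are 2-dimensional indecomposables with the expected dimension vectors
      E₁.Indecomposable ∧ E₂.Indecomposable ∧ E₃.Indecomposable ∧
      (∀ v, finrank k (E₁.carrier v) =
        (if v = i then 1 else 0) + (if v = j₁ then 1 else 0)) ∧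
      (∀ v, finrank k (E₂.carrier v) =
        (if v = i then 1 else 0) + (if v = j₂ then 1 else 0)) ∧
      (∀ v, finrank k (E₃.carrier v) =
        (if v = i then 1 else 0) + (if v = j₃ then 1 else 0)) ∧
      -- M is an indecomposable 5-dimensional module with the expected dimension vector
      M.Indecomposable ∧
      (∀ v, finrank k (M.carrier v) = (if v = i then 2 else 0) +
        (if v = j₁ then 1 else 0) + (if v = j₂ then 1 else 0) +
        (if v = j₃ then 1 else 0)) := by
  obtain ⟨-, -, -, hI⟩ := hadm
  refine ⟨simple k i, ofArrow α, ofArrow β, ofArrow γ, ofThreeArrows α β γ,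
    simpleToSum α β γ, sumToThreeArrows α β γ,
    satisfiesRelations_of_map_comp_map _ (fun _ _ => LinearMap.comp_zero _) hI,
    satisfiesRelations_of_map_comp_map _ (ofRadSqZero_map_comp_map _) hI,
    satisfiesRelations_of_map_comp_map _ (ofRadSqZero_map_comp_map _) hI,
    satisfiesRelations_of_map_comp_map _ (ofRadSqZero_map_comp_map _) hI,
    satisfiesRelations_of_map_comp_map _ (ofRadSqZero_map_comp_map _) hI,
    simpleToSum_injective α β γ, sumToThreeArrows_surjective α β γ, range_simpleToSum α β γ,
    finrank_simple i, fun _ _ _ => rfl,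
    ofArrow_indecomposable α, ofArrow_indecomposable β, ofArrow_indecomposable γ,
    finrank_ofArrow α, finrank_ofArrow β, finrank_ofArrow γ,
    ofThreeArrows_indecomposable hαβ hαγ hβγ, finrank_ofThreeArrows α β γ⟩
end

section
/- Let (Q, I) be a special biserial presentation (satisfying (S1) and (S2)) of a finite-dimensional algebra A = kQ/I, and suppose u − λv ∈ I where u, v are distinct parallel paths not in I, λ ≠ 0, and |u| ≤ |v|. Then u and v cannot start with the same arrow, and cannot end with the same arrow. -/
namespace SBAux

variable {V : Type} [Quiver V]

/-- Iterated composition of a closed path. -/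
def pathPow {a : V} (w : Quiver.Path a a) : ℕ → Quiver.Path a a
  | 0 => Quiver.Path.nil
  | n + 1 => (pathPow w n).comp w

lemma length_pathPow {a : V} (w : Quiver.Path a a) (n : ℕ) :
    (pathPow w n).length = n * w.length := by
  induction n with
  | zero => simp [pathPow]
  | succ n ih => simp [pathPow, Quiver.Path.length_comp, ih, Nat.succ_mul]

lemma exists_first {a b : V} (p : Quiver.Path a b) (h : 0 < p.length) :
    ∃ (c : V) (α : a ⟶ c) (p' : Quiver.Path c b), p = α.toPath.comp p' := by
  induction p with
  | nil => simp at h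
  | cons q e ih =>
    cases q with
    | nil => exact ⟨_, e, Quiver.Path.nil, rfl⟩
    | cons r f =>
      obtain ⟨c, α, p', hp⟩ := ih (by simp)
      exact ⟨c, α, p'.cons e, by rw [hp]; rfl⟩

end SBAux

/-- Let `(Q, I)` be a special biserial presentation of a finite-dimensional algebra
`A = kQ/I`.  We model the path algebra abstractly: `R` is a `k`-algebra together with a
multiplicative assignment `pe` of an element of `R` to every path of the quiver, and `I`
is a two-sided ideal of `R` which is admissible (all long paths lie in `I`, no path of
length `≤ 1` does).  Conditions (S1) and (S2) are the special biserial conditions.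
If `u - λ v ∈ I` where `u, v` are distinct parallel paths not in `I`, `λ ≠ 0` and
`|u| ≤ |v|`, then `u` and `v` cannot start with the same arrow, and cannot end with the
same arrow. -/
theorem special_biserial_binomial_relation_arrows
    {k : Type} [Field k] {R : Type} [Ring R] [Algebra k R] [FiniteDimensional k R]
    {V : Type} [Quiver V] [Fintype V] [∀ a b : V, Fintype (a ⟶ b)]
    (pe : ∀ {a b : V}, Quiver.Path a b → R)
    (hmul : ∀ (a b c : V) (p : Quiver.Path a b) (q : Quiver.Path b c),
      pe (p.comp q) = pe p * pe q)
    (I : TwoSidedIdeal R)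
    -- admissibility of I
    (hadm : ∃ m : ℕ, 2 ≤ m ∧ (∀ (a b : V) (p : Quiver.Path a b), m ≤ p.length → pe p ∈ I) ∧
      (∀ (a b : V) (p : Quiver.Path a b), p.length ≤ 1 → pe p ∉ I))
    -- (S1): every vertex has in-degree at most 2 and out-degree at most 2
    (hS1 : ∀ v : V, Nat.card (Σ a : V, a ⟶ v) ≤ 2 ∧ Nat.card (Σ b : V, v ⟶ b) ≤ 2)
    -- (S2): for every arrow α there is at most one arrow β with αβ ∉ I, and at most one
    -- arrow γ with γα ∉ I
    (hS2r : ∀ (a b : V) (α : a ⟶ b) (c c' : V) (β : b ⟶ c) (β' : b ⟶ c'),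
      pe (α.toPath.comp β.toPath) ∉ I → pe (α.toPath.comp β'.toPath) ∉ I →
      (⟨c, β⟩ : Σ w : V, b ⟶ w) = ⟨c', β'⟩)
    (hS2l : ∀ (a b : V) (α : a ⟶ b) (c c' : V) (γ : c ⟶ a) (γ' : c' ⟶ a),
      pe (γ.toPath.comp α.toPath) ∉ I → pe (γ'.toPath.comp α.toPath) ∉ I →
      (⟨c, γ⟩ : Σ w : V, w ⟶ a) = ⟨c', γ'⟩)
    -- the binomial relation u - λ v ∈ I
    {i j : V} (u v : Quiver.Path i j) (hne : u ≠ v)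
    (huI : pe u ∉ I) (hvI : pe v ∉ I)
    (lam : k) (hlam : lam ≠ 0) (hlen : u.length ≤ v.length)
    (hrel : pe u - lam • pe v ∈ I) :
    (¬ ∃ (c : V) (δ : i ⟶ c) (u' v' : Quiver.Path c j),
        u = (δ.toPath).comp u' ∧ v = (δ.toPath).comp v') ∧
    (¬ ∃ (c : V) (δ : c ⟶ j) (u' v' : Quiver.Path i c),
        u = u'.comp δ.toPath ∧ v = v'.comp δ.toPath) := by
  obtain ⟨m, hm2, hlong, hshort⟩ := hadm
  -- subpaths of paths not in I are not in I
  have sub_left : ∀ {a b c : V} (p : Quiver.Path a b) (q : Quiver.Path b c),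
      pe (p.comp q) ∉ I → pe p ∉ I := by
    intro a b c p q h hp
    exact h (by rw [hmul]; exact I.mul_mem_right _ _ hp)
  have sub_right : ∀ {a b c : V} (p : Quiver.Path a b) (q : Quiver.Path b c),
      pe (p.comp q) ∉ I → pe q ∉ I := by
    intro a b c p q h hq
    exact h (by rw [hmul]; exact I.mul_mem_left _ _ hq)
  -- pe of powers of a closed path
  have pe_pow : ∀ {a : V} (w : Quiver.Path a a) (n : ℕ),
      pe (SBAux.pathPow w (n + 1)) = (pe w) ^ (n + 1) := by
    intro a w n
    induction n with
    | zero =>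
      show pe (Quiver.Path.nil.comp w) = _
      rw [Quiver.Path.nil_comp, pow_one]
    | succ n ih =>
      show pe ((SBAux.pathPow w (n + 1)).comp w) = _
      rw [hmul, ih, ← pow_succ]
  -- the m-th power of λ•(pe w) lies in I for any closed path w of positive length
  have kill : ∀ {a : V} (w : Quiver.Path a a), 0 < w.length → (lam • pe w) ^ m ∈ I := by
    intro a w hw
    obtain ⟨n, rfl⟩ : ∃ n, m = n + 1 := ⟨m - 1, by omega⟩
    have h1 : pe (SBAux.pathPow w (n + 1)) ∈ I := by
      refine hlong _ _ _ ?_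
      rw [SBAux.length_pathPow]
      nlinarith
    rw [smul_pow, Algebra.smul_def]
    exact I.mul_mem_left _ _ (by rw [← pe_pow]; exact h1)
  constructor
  · -- same first arrow
    rintro ⟨c, δ, u', v', hu, hv⟩
    have key : ∀ (n : ℕ) {s : V} (p q : Quiver.Path s j), p.length ≤ n → pe p ∉ I →
        pe q ∉ I → p.length ≤ q.length →
        (∃ (c : V) (δ : s ⟶ c) (p' q' : Quiver.Path c j),
          p = δ.toPath.comp p' ∧ q = δ.toPath.comp q') →
        ∃ w : Quiver.Path j j, q = p.comp w := by
      intro n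
      induction n with
      | zero =>
        rintro s p q hpn _ _ _ ⟨c, δ, p', q', rfl, rfl⟩
        simp [Quiver.Path.length_comp, Quiver.Hom.toPath] at hpn
      | succ n ih =>
        rintro s p q hpn hpI hqI hpq ⟨c, δ, p', q', rfl, rfl⟩
        cases p' with
        | nil => exact ⟨q', rfl⟩
        | cons r e =>
          obtain ⟨d, β, p'', hp''⟩ := SBAux.exists_first (r.cons e) (by simp)
          have hq'len : 0 < q'.length := by
            simp [Quiver.Path.length_comp, Quiver.Hom.toPath] at hpq
            omega
          obtain ⟨d', β', q'', hq''⟩ := SBAux.exists_first q' hq'len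
          have h1 : pe (δ.toPath.comp β.toPath) ∉ I := by
            apply sub_left _ p''
            rw [Quiver.Path.comp_assoc, ← hp'']
            exact hpI
          have h2 : pe (δ.toPath.comp β'.toPath) ∉ I := by
            apply sub_left _ q''
            rw [Quiver.Path.comp_assoc, ← hq'']
            exact hqI
          obtain ⟨rfl, h4⟩ := Sigma.mk.inj_iff.mp (hS2r s c δ d d' β β' h1 h2)
          rw [heq_iff_eq] at h4
          subst h4
          obtain ⟨w, hw⟩ := ih (r.cons e) q'
            (by simp [Quiver.Path.length_comp, Quiver.Hom.toPath] at hpn ⊢; omega)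
            (sub_right δ.toPath _ hpI) (sub_right δ.toPath _ hqI)
            (by simp [Quiver.Path.length_comp, Quiver.Hom.toPath] at hpq ⊢; omega)
            ⟨d, β, p'', q'', hp'', hq''⟩
          exact ⟨w, by rw [hw, Quiver.Path.comp_assoc]⟩
    obtain ⟨w, hw⟩ := key u.length u v le_rfl huI hvI hlen ⟨c, δ, u', v', hu, hv⟩
    have hwpos : 0 < w.length := by
      cases w with
      | nil => exact absurd hw.symm hne
      | cons r e => simp
    -- algebraic contradiction
    set x : R := lam • pe w with hx
    have h5 : pe u * (1 - x) ∈ I := by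
      have : pe u * (1 - x) = pe u - lam • pe v := by
        rw [hw, hmul, mul_sub, mul_one, mul_smul_comm]
      rw [this]; exact hrel
    have h6 : pe u * ((1 - x) * ∑ t ∈ Finset.range m, x ^ t) ∈ I := by
      rw [← mul_assoc]
      exact I.mul_mem_right _ _ h5
    have h7 : (1 - x) * ∑ t ∈ Finset.range m, x ^ t = 1 - x ^ m := by
      rw [show (1 - x) = -(x - 1) from (neg_sub x 1).symm, neg_mul, mul_geom_sum, neg_sub]
    rw [h7] at h6
    have h9 : pe u * x ^ m ∈ I := I.mul_mem_left _ _ (kill w hwpos)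
    have : pe u ∈ I := by
      have h10 := I.add_mem h6 h9
      rwa [← mul_add, sub_add_cancel, mul_one] at h10
    exact huI this
  · -- same last arrow
    rintro ⟨c, δ, u', v', hu, hv⟩
    have key : ∀ (n : ℕ) {c : V} (p q : Quiver.Path i c), p.length ≤ n → pe p ∉ I →
        pe q ∉ I → p.length ≤ q.length →
        (∃ (d : V) (δ : d ⟶ c) (p' q' : Quiver.Path i d),
          p = p'.comp δ.toPath ∧ q = q'.comp δ.toPath) →
        ∃ w : Quiver.Path i i, q = w.comp p := by
      intro n
      induction n with
      | zero =>
        rintro c p q hpn _ _ _ ⟨d, δ, p', q', rfl, rfl⟩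
        simp [Quiver.Path.length_comp, Quiver.Hom.toPath] at hpn
      | succ n ih =>
        rintro c p q hpn hpI hqI hpq ⟨d, δ, p', q', rfl, rfl⟩
        cases p' with
        | nil => exact ⟨q', rfl⟩
        | cons r e =>
          cases q' with
          | nil => simp [Quiver.Path.length_comp, Quiver.Hom.toPath] at hpq
          | cons r' e' =>
            have h1 : pe (e.toPath.comp δ.toPath) ∉ I := by
              apply sub_right r
              rw [← Quiver.Path.comp_assoc]
              exact hpI
            have h2 : pe (e'.toPath.comp δ.toPath) ∉ I := by
              apply sub_right r'
              rw [← Quiver.Path.comp_assoc]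
              exact hqI
            obtain ⟨rfl, h4⟩ := Sigma.mk.inj_iff.mp (hS2l d c δ _ _ e e' h1 h2)
            rw [heq_iff_eq] at h4
            subst h4
            obtain ⟨w, hw⟩ := ih (r.cons e) (r'.cons e)
              (by simp [Quiver.Path.length_comp, Quiver.Hom.toPath] at hpn ⊢; omega)
              (sub_left _ δ.toPath hpI) (sub_left _ δ.toPath hqI)
              (by simp [Quiver.Path.length_comp, Quiver.Hom.toPath] at hpq ⊢; omega)
              ⟨_, e, r, r', rfl, rfl⟩
            exact ⟨w, by rw [hw, Quiver.Path.comp_assoc]⟩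
    obtain ⟨w, hw⟩ := key u.length u v le_rfl huI hvI hlen ⟨c, δ, u', v', hu, hv⟩
    have hwpos : 0 < w.length := by
      cases w with
      | nil =>
        rw [Quiver.Path.nil_comp] at hw
        exact absurd hw.symm hne
      | cons r e => simp
    set x : R := lam • pe w with hx
    have h5 : (1 - x) * pe u ∈ I := by
      have : (1 - x) * pe u = pe u - lam • pe v := by
        rw [hw, hmul, sub_mul, one_mul, smul_mul_assoc]
      rw [this]; exact hrel
    have h6 : ((∑ t ∈ Finset.range m, x ^ t) * (1 - x)) * pe u ∈ I := by
      rw [mul_assoc]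
      exact I.mul_mem_left _ _ h5
    have h7 : (∑ t ∈ Finset.range m, x ^ t) * (1 - x) = 1 - x ^ m := by
      rw [show (1 - x) = -(x - 1) from (neg_sub x 1).symm, mul_neg, geom_sum_mul, neg_sub]
    rw [h7] at h6
    have h9 : x ^ m * pe u ∈ I := I.mul_mem_right _ _ (kill w hwpos)
    have : pe u ∈ I := by
      have h10 := I.add_mem h6 h9
      rwa [← add_mul, sub_add_cancel, one_mul] at h10
    exact huI this
end

section
/- Let S be a subsemigroup of a free monoid that is closed under concatenation and free (freely generated by S \ S²). If S is nonempty and not cyclic (not generated by a single element), then S contains infinitely many pairwise distinct primitive elements; in particular S is infinite. -/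
private lemma FreeMonoid.length_pow' {α : Type*} (x : FreeMonoid α) (n : ℕ) :
    (x ^ n).length = n * x.length := by
  induction n with
  | zero => simp [FreeMonoid.length_one]
  | succ k ih => rw [pow_succ, FreeMonoid.length_mul, ih]; ring

private lemma list_prefix_of_prefix_length_le {α : Type*} {l₁ l₂ l₃ : List α}
    (h₁ : l₁ <+: l₃) (h₂ : l₂ <+: l₃) (h : l₁.length ≤ l₂.length) : l₁ <+: l₂ := by
  rw [List.prefix_iff_eq_take] at h₁ h₂ ⊢
  rw [h₂, List.take_take, min_eq_left h, ← h₁]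

private lemma comm_key {α : Type*} {x y z : FreeMonoid α} {n t : ℕ} (ht : 2 ≤ t)
    (hx : 1 ≤ x.length) (h : x ^ n * y = z ^ t)
    (hn : y.length + 2 * x.length ≤ n) : x * z = z * x := by
  have hL : n * x.length + y.length = t * z.length := by
    have := congrArg FreeMonoid.length h
    rwa [FreeMonoid.length_mul, FreeMonoid.length_pow', FreeMonoid.length_pow'] at this
  set X := x.length with hX
  set Y := y.length with hY
  set Z := z.length with hZ
  have h2z : 2 * Z ≤ t * Z := Nat.mul_le_mul_right _ ht
  have hnX : n ≤ n * X := Nat.le_mul_of_pos_right _ hx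
  have hC : Z + X ≤ n * X := by nlinarith [hL, h2z, hn, hnX]
  obtain ⟨m, rfl⟩ : ∃ m, n = m + 1 := ⟨n - 1, by omega⟩
  obtain ⟨s, rfl⟩ : ∃ s, t = s + 1 := ⟨t - 1, by omega⟩
  set W : List α := FreeMonoid.toList (x ^ (m + 1) * y) with hW
  have hzW : FreeMonoid.toList z <+: W := by
    rw [hW, h, pow_succ']
    exact ⟨FreeMonoid.toList (z ^ s), rfl⟩
  have hxmW : FreeMonoid.toList (x ^ m) <+: W := by
    rw [hW, pow_succ, mul_assoc]
    exact ⟨FreeMonoid.toList (x * y), rfl⟩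
  have hzsW : FreeMonoid.toList (z ^ s) <+: W := by
    rw [hW, h, pow_succ]
    exact ⟨FreeMonoid.toList z, rfl⟩
  have hxW : FreeMonoid.toList x <+: W := by
    rw [hW, pow_succ', mul_assoc]
    exact ⟨FreeMonoid.toList (x ^ m * y), rfl⟩
  have hmX : (m + 1) * X = m * X + X := by ring
  have hlen1 : (FreeMonoid.toList z).length ≤ (FreeMonoid.toList (x ^ m)).length := by
    show Z ≤ (x ^ m).length
    rw [FreeMonoid.length_pow', ← hX]
    omega
  have hlen2 : (FreeMonoid.toList x).length ≤ (FreeMonoid.toList (z ^ s)).length := by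
    show X ≤ (z ^ s).length
    rw [FreeMonoid.length_pow', ← hZ]
    have hsZ : (s + 1) * Z = s * Z + Z := by ring
    omega
  have h1 : FreeMonoid.toList z <+: FreeMonoid.toList (x ^ m) :=
    list_prefix_of_prefix_length_le hzW hxmW hlen1
  have h2 : FreeMonoid.toList x <+: FreeMonoid.toList (z ^ s) :=
    list_prefix_of_prefix_length_le hxW hzsW hlen2
  have hxzW : FreeMonoid.toList (x * z) <+: W := by
    have hWeq : W = FreeMonoid.toList x ++ (FreeMonoid.toList (x ^ m) ++ FreeMonoid.toList y) := by
      rw [hW, pow_succ', mul_assoc]; rfl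
    obtain ⟨r, hr⟩ := h1
    refine ⟨r ++ FreeMonoid.toList y, ?_⟩
    rw [hWeq, FreeMonoid.toList_mul, ← hr]
    simp [List.append_assoc]
  have hzxW : FreeMonoid.toList (z * x) <+: W := by
    have hWeq : W = FreeMonoid.toList z ++ FreeMonoid.toList (z ^ s) := by
      rw [hW, h, pow_succ']; rfl
    obtain ⟨r, hr⟩ := h2
    refine ⟨r, ?_⟩
    rw [hWeq, FreeMonoid.toList_mul, ← hr]
    simp [List.append_assoc]
  have hlen : (FreeMonoid.toList (x * z)).length = (FreeMonoid.toList (z * x)).length := by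
    show (x * z).length = (z * x).length
    rw [FreeMonoid.length_mul, FreeMonoid.length_mul, Nat.add_comm]
  have := (list_prefix_of_prefix_length_le hxzW hzxW hlen.le).eq_of_length hlen
  exact FreeMonoid.toList.injective this

/-- Let `S` be a subsemigroup of a free monoid (closed under concatenation, not containing
the empty word) which is free, i.e. freely generated by its base `B = S \ S²`.  If `S` is
nonempty and not cyclic (its base has at least two elements), then `S` contains infinitely
many pairwise distinct primitive elements; in particular `S` is infinite. -/
theorem free_subsemigroup_noncyclic_infinitely_many_primitives {α : Type*}
    (S : Set (FreeMonoid α))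
    (hmul : ∀ u ∈ S, ∀ v ∈ S, u * v ∈ S)
    (hone : (1 : FreeMonoid α) ∉ S)
    (hne : S.Nonempty)
    -- the base of `S`: elements of `S` that are not products of two elements of `S`
    (B : Set (FreeMonoid α))
    (hB : B = S \ {w | ∃ u ∈ S, ∃ v ∈ S, w = u * v})
    -- `S` is generated by `B` ...
    (hgen : ∀ s ∈ S, ∃ l : List (FreeMonoid α), l ≠ [] ∧ (∀ b ∈ l, b ∈ B) ∧ l.prod = s)
    -- ... freely
    (hfree : ∀ l₁ l₂ : List (FreeMonoid α), (∀ b ∈ l₁, b ∈ B) → (∀ b ∈ l₂, b ∈ B) →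
      l₁.prod = l₂.prod → l₁ = l₂)
    -- `S` is not cyclic
    (hnc : ¬ B.Subsingleton) :
    {w | w ∈ S ∧ FreeMonoid.Primitive w}.Infinite ∧ S.Infinite := by
  rw [Set.not_subsingleton_iff] at hnc
  obtain ⟨x, hxB, y, hyB, hxy⟩ := hnc
  have hBS : B ⊆ S := by rw [hB]; exact Set.diff_subset
  have hxS : x ∈ S := hBS hxB
  have hyS : y ∈ S := hBS hyB
  have hx1 : x ≠ 1 := fun h => hone (h ▸ hxS)
  have hy1 : y ≠ 1 := fun h => hone (h ▸ hyS)
  have hxlen : 1 ≤ x.length :=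
    Nat.one_le_iff_ne_zero.2 fun h => hx1 (FreeMonoid.length_eq_zero.1 h)
  have hylen : 1 ≤ y.length :=
    Nat.one_le_iff_ne_zero.2 fun h => hy1 (FreeMonoid.length_eq_zero.1 h)
  have hcomm : x * y ≠ y * x := by
    intro hc
    have hl : ∀ b ∈ [x, y], b ∈ B := by
      intro b hb
      rw [List.mem_cons, List.mem_singleton] at hb
      rcases hb with rfl | rfl
      · exact hxB
      · exact hyB
    have hl' : ∀ b ∈ [y, x], b ∈ B := by
      intro b hb
      rw [List.mem_cons, List.mem_singleton] at hb
      rcases hb with rfl | rfl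
      · exact hyB
      · exact hxB
    have hp : ([x, y] : List (FreeMonoid α)).prod = ([y, x] : List (FreeMonoid α)).prod := by
      simp only [List.prod_cons, List.prod_nil, mul_one]
      exact hc
    have := hfree [x, y] [y, x] hl hl' hp
    exact hxy (List.head_eq_of_cons_eq this)
  have hmem : ∀ n : ℕ, x ^ n * y ∈ S := by
    intro n
    induction n with
    | zero => simpa using hyS
    | succ k ih =>
      rw [pow_succ', mul_assoc]
      exact hmul x hxS _ ih
  set N := y.length + 2 * x.length with hN
  have hprim : ∀ n, N ≤ n → FreeMonoid.Primitive (x ^ n * y) := by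
    intro n hn
    constructor
    · intro h1
      have := congrArg FreeMonoid.length h1
      rw [FreeMonoid.length_mul, FreeMonoid.length_pow', FreeMonoid.length_one] at this
      omega
    · rintro ⟨z, t, ht, hzt⟩
      have hxz := comm_key ht hxlen hzt (by omega)
      have hcxz : Commute x z := hxz
      have h2 : x * (x ^ n * y) = (x ^ n * y) * x := by
        rw [hzt]; exact (hcxz.pow_right t).eq
      have e1 : x * x ^ n * y = x ^ n * (x * y) := by
        rw [← pow_succ', pow_succ, mul_assoc]
      have e2 : x ^ n * y * x = x ^ n * (y * x) := mul_assoc _ _ _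
      rw [← mul_assoc, e1, e2] at h2
      exact hcomm (mul_left_cancel h2)
  have hinj : Function.Injective (fun n : ℕ => x ^ (n + N) * y) := by
    intro a b hab
    have := congrArg FreeMonoid.length hab
    simp only [FreeMonoid.length_mul, FreeMonoid.length_pow'] at this
    have := Nat.eq_of_mul_eq_mul_right hxlen (by omega : (a + N) * x.length = (b + N) * x.length)
    omega
  have h1 : {w | w ∈ S ∧ FreeMonoid.Primitive w}.Infinite :=
    Set.infinite_of_injective_forall_mem hinj
      (fun n => ⟨hmem _, hprim _ (by omega)⟩)
  exact ⟨h1, h1.mono fun w hw => hw.1⟩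
end
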